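/- arXiv:0910.2085 — 3 statements merged into one kernel-verified Lean document; each statement's English description precedes it below -/
import Mathlib

section
/- The energy operator E = Σ_{α≥1} u^{i,α} p_{i,α,0} − 1 on the differential polynomial algebra 𝒜 annihilates the image of the total derivative: E ∘ ∂ = 0. Moreover, ∂ ∘ E = −Σ_i u^{i,1} δ_i, where δ_i = Σ_{t≥0} (−∂)^t ∂_{i,t} is the variational derivative. -/
open MvPolynomial

/-- The differential polynomial algebra `𝒜` in the variables `u^{i,s}`,
`1 ≤ i ≤ n`, `s ≥ 0`. -/
abbrev DP (n : ℕ) : Type := MvPolynomial (Fin n × ℕ) ℝ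

/-- The total derivative `∂ = Σ u^{i,s+1} ∂_{i,s}` (on each differential
polynomial only finitely many terms act nontrivially). -/
noncomputable def totalDer {n : ℕ} (f : DP n) : DP n :=
  ∑ v ∈ f.vars, X (v.1, v.2 + 1) * pderiv v f

/-- A bound such that `∂_{i,k} f = 0` for all `k ≥ vbound f`. -/
noncomputable def vbound {n : ℕ} (f : DP n) : ℕ := (f.vars.sup (fun v => v.2)) + 1

/-- The higher generalized momentum operator
`p_{i,α,s} = Σ_{t≥0} (-1)^t C(t+s,s) ∂^t ∘ ∂_{i,α+s+t}`; the sum is finite on each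
differential polynomial, and is truncated at a sufficiently large bound. -/
noncomputable def pmom {n : ℕ} (i : Fin n) (α s : ℕ) (f : DP n) : DP n :=
  ∑ t ∈ Finset.range (vbound f),
    ((-1 : ℝ) ^ t * (Nat.choose (t + s) s : ℝ)) • totalDer^[t] (pderiv (i, α + s + t) f)

/-- The higher energy operator `E_s = Σ_{α≥1} u^{i,α} p_{i,α,s}`. -/
noncomputable def Eop {n : ℕ} (s : ℕ) (f : DP n) : DP n :=
  ∑ i : Fin n, ∑ α ∈ Finset.Icc 1 (vbound f), X (i, α) * pmom i α s f

/-- The energy operator `E = E₀ - 1`. -/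
noncomputable def Ener {n : ℕ} (f : DP n) : DP n := Eop 0 f - f

/-!
Both identities reduce to two telescoping facts about the momenta. Since
`⁅∂_{i,k+1}, ∂⁆ = ∂_{i,k}`, the summands `b^α_t = (-1)^t ∂^t ∂_{i,α+t}` of `p_{i,α,0}` satisfy
`∂ ∘ b^{α+1}_t = -b^α_{t+1}` and `b^{α+1}_t ∘ ∂ = b^α_t - b^α_{t+1}`, whence
`∂ ∘ p_{i,α+1,0} = ∂_{i,α} - p_{i,α,0}` and `p_{i,α+1,0} ∘ ∂ = ∂_{i,α}`.
The second gives `E₀ ∘ ∂ = Σ u^{i,α+1} ∂_{i,α} = ∂`. By the first and the Leibniz rule,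
`∂ ∘ E₀ = ∂ + Σ_i Σ_α (u^{i,α+2} p_{i,α+1,0} - u^{i,α+1} p_{i,α,0})`, and the inner sum
telescopes to `-u^{i,1} p_{i,0,0}`.
-/

theorem MvPolynomial.derivation_eq_sum_pderiv {R σ : Type*} [CommSemiring R]
    (D : Derivation R (MvPolynomial σ R) (MvPolynomial σ R)) {f : MvPolynomial σ R}
    {S : Finset σ} (h : f.vars ⊆ S) :
    D f = ∑ v ∈ S, D (X v) * pderiv v f := by
  classical
  have sum_apply (g : MvPolynomial σ R) :
      (∑ v ∈ S, D (X v) • pderiv v) g = ∑ v ∈ S, D (X v) * pderiv v g := by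
    rw [← Derivation.coeFnAddMonoidHom_apply, map_sum, Finset.sum_apply]
    rfl
  rw [← sum_apply]
  refine derivation_eq_of_forall_mem_vars fun w hw => ?_
  simp [sum_apply, pderiv_X, Pi.single_apply, h hw]

section TotalDerivative

variable {n : ℕ}

variable (n) in
noncomputable def totalDerivation : Derivation ℝ (DP n) (DP n) :=
  mkDerivation ℝ fun v => X (v.1, v.2 + 1)

@[simp]
theorem totalDerivation_X (v : Fin n × ℕ) : totalDerivation n (X v) = X (v.1, v.2 + 1) :=
  mkDerivation_X _ _ _

theorem totalDerivation_eq_sum {f : DP n} {S : Finset (Fin n × ℕ)} (h : f.vars ⊆ S) :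
    totalDerivation n f = ∑ v ∈ S, X (v.1, v.2 + 1) * pderiv v f := by
  rw [derivation_eq_sum_pderiv _ h]
  simp only [totalDerivation_X]

theorem totalDer_eq : (totalDer : DP n → DP n) = totalDerivation n :=
  funext fun _ => (totalDerivation_eq_sum subset_rfl).symm

theorem lie_pderiv_succ_totalDerivation (i : Fin n) (k : ℕ) :
    ⁅(pderiv (i, k + 1) : Derivation ℝ (DP n) (DP n)), totalDerivation n⁆ = pderiv (i, k) := by
  refine derivation_ext fun v => ?_
  have hconst : pderiv (i, k + 1) (X v : DP n) = C (if v = (i, k + 1) then 1 else 0) := by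
    rw [pderiv_X, Pi.single_apply]; split_ifs <;> simp
  rw [Derivation.commutator_apply, hconst, derivation_C, sub_zero, totalDerivation_X,
    pderiv_X, pderiv_X, Pi.single_apply, Pi.single_apply]
  simp only [Prod.ext_iff, Nat.add_right_cancel_iff]

theorem pderiv_succ_totalDer (i : Fin n) (k : ℕ) (f : DP n) :
    pderiv (i, k + 1) (totalDer f) = totalDer (pderiv (i, k + 1) f) + pderiv (i, k) f := by
  have h := congrArg (· f) (lie_pderiv_succ_totalDerivation i k)
  simp only [Derivation.commutator_apply] at h
  rw [totalDer_eq, ← h]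
  abel

end TotalDerivative

section Momentum

variable {n : ℕ}

theorem lt_vbound_of_mem_vars {f : DP n} {v : Fin n × ℕ} (hv : v ∈ f.vars) : v.2 < vbound f :=
  Nat.lt_succ_of_le (Finset.le_sup (f := fun v => v.2) hv)

theorem pderiv_eq_zero_of_vbound_le {f : DP n} {i : Fin n} {k : ℕ} (h : vbound f ≤ k) :
    pderiv (i, k) f = 0 :=
  pderiv_eq_zero_of_notMem_vars fun hv => (lt_vbound_of_mem_vars hv).not_ge h

noncomputable def momTerm (i : Fin n) (α : ℕ) (f : DP n) (t : ℕ) : DP n :=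
  (-1 : ℝ) ^ t • (totalDerivation n)^[t] (pderiv (i, α + t) f)

theorem momTerm_eq_zero {f : DP n} (i : Fin n) {α t : ℕ} (h : vbound f ≤ α + t) :
    momTerm i α f t = 0 := by
  rw [momTerm, pderiv_eq_zero_of_vbound_le h, iterate_map_zero, smul_zero]

@[simp]
theorem momTerm_zero (i : Fin n) (α : ℕ) (f : DP n) : momTerm i α f 0 = pderiv (i, α) f := by
  rw [momTerm, pow_zero, one_smul, add_zero, Function.iterate_zero_apply]

theorem pmom_zero_eq_sum_momTerm (i : Fin n) (α : ℕ) {f : DP n} {N : ℕ} (h : vbound f ≤ N) :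
    pmom i α 0 f = ∑ t ∈ Finset.range N, momTerm i α f t := by
  simp only [pmom, momTerm, totalDer_eq, Nat.choose_zero_right, Nat.cast_one, mul_one, add_zero]
  refine Finset.sum_subset (Finset.range_subset_range.2 h) fun t _ ht => ?_
  rw [pderiv_eq_zero_of_vbound_le (by simp at ht; omega), iterate_map_zero, smul_zero]

theorem pmom_zero_eq_zero (i : Fin n) {α : ℕ} {f : DP n} (h : vbound f ≤ α) :
    pmom i α 0 f = 0 := by
  rw [pmom_zero_eq_sum_momTerm i α le_rfl]
  exact Finset.sum_eq_zero fun t _ => momTerm_eq_zero i (by omega)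

theorem totalDerivation_momTerm_succ (i : Fin n) (α : ℕ) (f : DP n) (t : ℕ) :
    totalDerivation n (momTerm i (α + 1) f t) = -momTerm i α f (t + 1) := by
  rw [momTerm, momTerm, Derivation.map_smul,
    ← Function.iterate_succ_apply' (totalDerivation n), pow_succ, mul_smul, neg_one_smul,
    smul_neg, neg_neg, add_right_comm]
  rfl

theorem momTerm_succ_totalDer (i : Fin n) (α : ℕ) (f : DP n) (t : ℕ) :
    momTerm i (α + 1) (totalDer f) t = momTerm i α f t - momTerm i α f (t + 1) := by
  rw [momTerm, momTerm, momTerm, add_right_comm, pderiv_succ_totalDer, iterate_map_add,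
    totalDer_eq, ← Function.iterate_succ_apply, pow_succ, mul_smul, neg_one_smul, smul_neg,
    sub_neg_eq_add, add_comm, smul_add, ← add_assoc]

theorem totalDer_pmom_succ (i : Fin n) (α : ℕ) (f : DP n) :
    totalDer (pmom i (α + 1) 0 f) = pderiv (i, α) f - pmom i α 0 f := by
  have hN := le_refl (vbound f)
  rw [pmom_zero_eq_sum_momTerm i _ hN, pmom_zero_eq_sum_momTerm i _ hN, totalDer_eq, map_sum]
  simp only [totalDerivation_momTerm_succ, Finset.sum_neg_distrib]
  have htel := Finset.sum_range_sub' (momTerm i α f) (vbound f)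
  rw [momTerm_eq_zero i (t := vbound f) (by omega), sub_zero, Finset.sum_sub_distrib] at htel
  rw [← momTerm_zero, ← htel]
  abel

theorem pmom_succ_totalDer (i : Fin n) (α : ℕ) (f : DP n) :
    pmom i (α + 1) 0 (totalDer f) = pderiv (i, α) f := by
  rw [pmom_zero_eq_sum_momTerm i _ (le_max_left _ (vbound f))]
  simp only [momTerm_succ_totalDer]
  rw [Finset.sum_range_sub', momTerm_eq_zero i (t := max _ _) (by omega), sub_zero,
    momTerm_zero]

end Momentum

section Energy

variable {n : ℕ}

theorem totalDer_eq_sum_range {f : DP n} {N : ℕ} (h : vbound f ≤ N) :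
    totalDer f = ∑ i : Fin n, ∑ s ∈ Finset.range N, X (i, s + 1) * pderiv (i, s) f := by
  have hvars : f.vars ⊆ Finset.univ ×ˢ Finset.range N := fun v hv =>
    Finset.mem_product.2
      ⟨Finset.mem_univ _, Finset.mem_range.2 ((lt_vbound_of_mem_vars hv).trans_le h)⟩
  rw [totalDer_eq, totalDerivation_eq_sum hvars, Finset.sum_product]

theorem Eop_zero_eq_sum {f : DP n} {N : ℕ} (h : vbound f ≤ N) :
    Eop 0 f = ∑ i : Fin n, ∑ s ∈ Finset.range N, X (i, s + 1) * pmom i (s + 1) 0 f := by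
  refine Finset.sum_congr rfl fun i _ => ?_
  rw [Finset.range_eq_Ico, Finset.sum_Ico_add' (fun α => X (i, α) * pmom i α 0 f), zero_add,
    Finset.Ico_add_one_right_eq_Icc]
  refine Finset.sum_subset (Finset.Icc_subset_Icc_right h) fun α hα hα' => ?_
  rw [pmom_zero_eq_zero i (by simp at hα hα'; omega), mul_zero]

theorem Eop_zero_totalDer (f : DP n) : Eop 0 (totalDer f) = totalDer f := by
  rw [Eop_zero_eq_sum (le_max_left _ (vbound f))]
  simp only [pmom_succ_totalDer]
  exact (totalDer_eq_sum_range (le_max_right _ _)).symm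

theorem totalDer_Eop_zero (f : DP n) :
    totalDer (Eop 0 f) = totalDer f - ∑ i : Fin n, X (i, 1) * pmom i 0 0 f := by
  rw [Eop_zero_eq_sum le_rfl, totalDer_eq_sum_range (f := f) le_rfl, ← Finset.sum_sub_distrib,
    totalDer_eq, map_sum]
  refine Finset.sum_congr rfl fun i _ => ?_
  set c : ℕ → DP n := fun s => X (i, s + 1) * pmom i s 0 f
  have hterm (s : ℕ) : totalDerivation n (X (i, s + 1) * pmom i (s + 1) 0 f)
      = X (i, s + 1) * pderiv (i, s) f + (c (s + 1) - c s) := by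
    rw [Derivation.leibniz, ← totalDer_eq, totalDer_pmom_succ, totalDer_eq, totalDerivation_X,
      smul_eq_mul, smul_eq_mul]
    ring
  have hc : c (vbound f) = 0 := by simp only [c, pmom_zero_eq_zero i le_rfl, mul_zero]
  rw [map_sum, Finset.sum_congr rfl fun s _ => hterm s, Finset.sum_add_distrib,
    Finset.sum_range_sub, hc, zero_sub, ← sub_eq_add_neg]

end Energy

/-- `E ∘ ∂ = 0` and `∂ ∘ E = -Σ_i u^{i,1} δ_i`, where `δ_i = p_{i,0,0}` is the
variational derivative. -/
theorem stmt1 {n : ℕ} :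
    (∀ f : DP n, Ener (totalDer f) = 0) ∧
    (∀ f : DP n, totalDer (Ener f) = -∑ i : Fin n, X (i, 1) * pmom i 0 0 f) := by
  refine ⟨fun f => ?_, fun f => ?_⟩
  · rw [Ener, Eop_zero_totalDer, sub_self]
  · rw [Ener, totalDer_eq, map_sub, ← totalDer_eq, totalDer_Eop_zero, sub_sub_cancel_left]
end

section
/- For P ∈ Alt^p(F,F), Q ∈ Alt^q(F,F) and F₁ ∈ F, writing P̃ = [P,F₁] and Q̃ = [Q,F₁] for the insertions of F₁, one has (P∧̄Q)(F₁,F₂,…,F_{p+q−1}) = (P∧̄Q̃)(F₂,…,F_{p+q−1}) + (−1)^{q+1}(P̃∧̄Q)(F₂,…,F_{p+q−1}). -/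
/-- `V F p` is the space of `p`-linear alternating maps `F^p → F`, modeled as raw maps
`(Fin p → F) → F`; `V F 0 ≅ F` (0-vectors are elements of `F`). -/
abbrev V (F : Type*) (p : ℕ) : Type _ := (Fin p → F) → F

/-- `P : V F p` is an alternating `p`-vector: multilinear and vanishing whenever two
arguments coincide. -/
def IsAlt {F : Type*} [AddCommGroup F] [Module ℝ F] {p : ℕ} (P : V F p) : Prop :=
  (∀ (v : Fin p → F) (i : Fin p) (x y : F),
      P (Function.update v i (x + y)) = P (Function.update v i x) + P (Function.update v i y)) ∧
  (∀ (v : Fin p → F) (i : Fin p) (c : ℝ) (x : F),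
      P (Function.update v i (c • x)) = c • P (Function.update v i x)) ∧
  (∀ (v : Fin p → F) (i j : Fin p), i ≠ j → v i = v j → P v = 0)

/-- The `(q, N-q)`-shuffles in `S_N`: permutations `I = (i₁,…,i_N)` with
`i₁ < ⋯ < i_q` and `i_{q+1} < ⋯ < i_N`. -/
def Shuffles (N q : ℕ) : Finset (Equiv.Perm (Fin N)) :=
  Finset.univ.filter fun σ =>
    (∀ a b : Fin N, a < b → b.1 < q → σ a < σ b) ∧
    (∀ a b : Fin N, a < b → q ≤ a.1 → σ a < σ b)

/-- The Nijenhuis–Richardson insertion product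
`(P∧̄Q)(F₁,…,F_{p+q-1}) = Σ_{I∈S_{p,q}} (-1)^{|I|} P(Q(F_{i₁},…,F_{i_q}),F_{i_{q+1}},…,F_{i_{p+q-1}})`,
with the convention `P∧̄Q = 0` when `P` is a 0-vector. -/
noncomputable def nrW {F : Type*} [AddCommGroup F] [Module ℝ F] {p q : ℕ}
    (P : V F p) (Q : V F q) : V F (p + q - 1) :=
  if hp : p = 0 then 0
  else fun args =>
    ∑ σ ∈ Shuffles (p + q - 1) q,
      ((Equiv.Perm.sign σ : ℤ) : ℝ) •
        P (fun m => (Fin.cons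
            (Q fun k => args (σ ⟨k.1, by have := k.isLt; omega⟩))
            (fun k : Fin (p - 1) => args (σ ⟨q + k.1, by have := k.isLt; omega⟩)) :
              Fin ((p - 1) + 1) → F)
            (Fin.cast (by omega : p = (p - 1) + 1) m))

/-- The Nijenhuis–Richardson bracket `[P,Q] = (-1)^{(p+1)q} P∧̄Q + (-1)^p Q∧̄P`. -/
noncomputable def nrBr {F : Type*} [AddCommGroup F] [Module ℝ F] {p q : ℕ}
    (P : V F p) (Q : V F q) : V F (p + q - 1) :=
  fun v => ((-1 : ℝ) ^ ((p + 1) * q)) • nrW P Q v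
    + ((-1 : ℝ) ^ p) • nrW Q P (fun k => v (Fin.cast (by omega : q + p - 1 = p + q - 1) k))

/-- Insertion of `x ∈ F` into the first slot: `[Q, x] = Q(x, ·, …, ·) ∈ V^{m-1}`. -/
noncomputable def insert0 {F : Type*} {m : ℕ} (x : F) (Q : V F m) : V F (m - 1) :=
  fun w => Q (fun k => if h : k.1 = 0 then x else w ⟨k.1 - 1, by have := k.isLt; omega⟩)

/-!
A `(q+1)`-shuffle `σ` of `{0, …, p+q-1}` is increasing on both blocks, so the position
`i = σ⁻¹ 0` of `F₁` is either `0` or `q+1`, and `σ = liftAt i τ` for a unique permutation `τ`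
of the remaining positions. The shuffles with `i = 0` are the lifts of the `q`-shuffles `τ`, with
the same sign, and contribute `P∧̄Q̃`. Those with `i = q+1` are the lifts of the `(q+1)`-shuffles
`τ`, with sign `(-1)^(q+1) sign τ`; there `F₁` is the second argument of `P`, and swapping it
with the first one gives `-P̃∧̄Q`.
-/

open Equiv Equiv.Perm

namespace Equiv.Perm

variable {n : ℕ}

/-- The permutation of `Fin (n + 1)` sending `i` to `0` and `i.succAbove j` to `(τ j).succ`;
every permutation has this form for `i = σ⁻¹ 0`. -/
def liftAt (i : Fin (n + 1)) (τ : Perm (Fin n)) : Perm (Fin (n + 1)) :=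
  decomposeFin.symm (0, τ) * i.cycleRange

@[simp]
theorem liftAt_apply_self (i : Fin (n + 1)) (τ : Perm (Fin n)) : liftAt i τ i = 0 := by
  simp [liftAt]

@[simp]
theorem liftAt_apply_succAbove (i : Fin (n + 1)) (τ : Perm (Fin n)) (j : Fin n) :
    liftAt i τ (i.succAbove j) = (τ j).succ := by
  simp [liftAt]

@[simp]
theorem sign_liftAt (i : Fin (n + 1)) (τ : Perm (Fin n)) :
    sign (liftAt i τ) = (-1) ^ (i : ℕ) * sign τ := by
  simp [liftAt, Fin.sign_cycleRange, mul_comm]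

theorem liftAt_inj {i j : Fin (n + 1)} {τ ρ : Perm (Fin n)} :
    liftAt i τ = liftAt j ρ ↔ i = j ∧ τ = ρ := by
  refine ⟨fun h => ?_, fun ⟨hij, hτρ⟩ => hij ▸ hτρ ▸ rfl⟩
  obtain rfl : i = j := (liftAt j ρ).injective (by rw [liftAt_apply_self, ← h, liftAt_apply_self])
  exact ⟨rfl, Equiv.ext fun k =>
    Fin.succ_injective _ (by simpa using congrArg (· (i.succAbove k)) h)⟩

theorem liftAt_injective (i : Fin (n + 1)) : Function.Injective (liftAt i) :=
  fun _ _ h => (liftAt_inj.mp h).2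

theorem exists_liftAt_eq (σ : Perm (Fin (n + 1))) : ∃ i τ, liftAt i τ = σ := by
  set i := σ⁻¹ 0
  set ρ := σ * i.cycleRange⁻¹
  have hρ : decomposeFin.symm (0, (decomposeFin ρ).2) = ρ := by
    have h0 : (decomposeFin ρ).1 = 0 := by
      rw [← decomposeFin_symm_apply_zero (decomposeFin ρ).1 (decomposeFin ρ).2, Prod.mk.eta,
        Equiv.symm_apply_apply]
      simp [ρ, i]
    rw [← h0, Prod.mk.eta, Equiv.symm_apply_apply]
  exact ⟨i, (decomposeFin ρ).2, by rw [liftAt, hρ, inv_mul_cancel_right]⟩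

theorem strictMonoOn_liftAt_iff {i : Fin (n + 1)} {τ : Perm (Fin n)} {S : Set (Fin (n + 1))} :
    StrictMonoOn (liftAt i τ) S ↔
      StrictMonoOn τ (i.succAbove ⁻¹' S) ∧ (i ∈ S → ∀ b ∈ S, i ≤ b) := by
  constructor
  · intro h
    refine ⟨fun j hj k hk hjk => ?_, fun hi b hb => ?_⟩
    · simpa using h hj hk (Fin.strictMono_succAbove i hjk)
    · by_contra! hbi
      simpa using h hb hi hbi
  · rintro ⟨hτ, hmin⟩ a ha b hb hab
    obtain rfl | ⟨j, rfl⟩ := Fin.eq_self_or_eq_succAbove i a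
    · rw [liftAt_apply_self, Fin.pos_iff_ne_zero, ← liftAt_apply_self a τ]
      exact (liftAt a τ).injective.ne hab.ne'
    obtain rfl | ⟨k, rfl⟩ := Fin.eq_self_or_eq_succAbove i b
    · exact absurd (hmin hb _ ha) (not_le.mpr hab)
    simpa using hτ ha hb (Fin.succAbove_lt_succAbove_iff.mp hab)

/-- Extended by the identity beyond `N`, so that shuffle summands need no bound proofs on
their indices. -/
def natApply {N : ℕ} (σ : Perm (Fin N)) (k : ℕ) : ℕ := if h : k < N then σ ⟨k, h⟩ else k

theorem natApply_liftAt_self (i : Fin (n + 1)) (τ : Perm (Fin n)) :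
    (liftAt i τ).natApply i = 0 := by
  simp [natApply, i.isLt]

theorem natApply_liftAt_of_lt {i : Fin (n + 1)} (τ : Perm (Fin n)) {k : ℕ} (hk : k < i) :
    (liftAt i τ).natApply k = τ.natApply k + 1 := by
  have hkn : k < n := by omega
  have : (⟨k, by omega⟩ : Fin (n + 1)) = i.succAbove ⟨k, hkn⟩ :=
    (Fin.succAbove_of_castSucc_lt i ⟨k, hkn⟩ hk).symm
  simp [natApply, hkn, show k < n + 1 by omega, this]

theorem natApply_liftAt_of_le {i : Fin (n + 1)} (τ : Perm (Fin n)) {k : ℕ} (hk : i ≤ k) :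
    (liftAt i τ).natApply (k + 1) = τ.natApply k + 1 := by
  by_cases hkn : k < n
  · have : (⟨k + 1, by omega⟩ : Fin (n + 1)) = i.succAbove ⟨k, hkn⟩ :=
      (Fin.succAbove_of_le_castSucc i ⟨k, hkn⟩ hk).symm
    simp [natApply, hkn, this]
  · simp [natApply, hkn]

end Equiv.Perm

theorem mem_shuffles_iff {N q : ℕ} {σ : Perm (Fin N)} :
    σ ∈ Shuffles N q ↔ StrictMonoOn σ {a | a.1 < q} ∧ StrictMonoOn σ {a | q ≤ a.1} := by
  simp only [Shuffles, Finset.mem_filter, Finset.mem_univ, true_and, StrictMonoOn,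
    Set.mem_ofPred_eq]
  constructor
  · rintro ⟨h₁, h₂⟩
    exact ⟨fun a _ b hb hab => h₁ a b hab hb, fun a ha b _ hab => h₂ a b hab ha⟩
  · rintro ⟨h₁, h₂⟩
    exact ⟨fun a b hab hb => h₁ (lt_trans hab hb) hb hab,
      fun a b hab ha => h₂ ha (le_trans ha (le_of_lt hab)) hab⟩

theorem liftAt_mem_shuffles_iff {n q : ℕ} {i : Fin (n + 1)} {τ : Perm (Fin n)} :
    liftAt i τ ∈ Shuffles (n + 1) (q + 1) ↔
      (i = 0 ∧ τ ∈ Shuffles n q) ∨ ((i : ℕ) = q + 1 ∧ τ ∈ Shuffles n (q + 1)) := by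
  simp only [mem_shuffles_iff, strictMonoOn_liftAt_iff]
  by_cases h0 : i = 0
  · subst h0
    simp
  by_cases hq : i.1 = q + 1
  · have e₁ : i.succAbove ⁻¹' {a | a.1 < q + 1} = {j | j.1 < q + 1} := by
      ext j
      simp only [Set.mem_preimage, Set.mem_ofPred_eq, Fin.succAbove, Fin.lt_def, Fin.val_castSucc]
      split_ifs <;> grind
    have e₂ : i.succAbove ⁻¹' {a | q + 1 ≤ a.1} = {j | q + 1 ≤ j.1} := by
      ext j
      simp only [Set.mem_preimage, Set.mem_ofPred_eq, Fin.succAbove, Fin.lt_def, Fin.val_castSucc]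
      split_ifs <;> grind
    rw [e₁, e₂]
    simp [hq, h0, Fin.le_def]
  · simp only [h0, hq, false_and, or_false, iff_false]
    rintro ⟨⟨-, h₁⟩, -, h₂⟩
    rcases lt_or_ge i.1 (q + 1) with hi | hi
    · exact h0 (le_antisymm (h₁ hi 0 (by simp)) (Fin.zero_le _))
    · have := h₂ hi ⟨q + 1, by omega⟩ (le_refl (q + 1))
      simp only [Fin.le_def] at this
      omega

theorem shuffles_succ_eq_union {n q : ℕ} (h : q + 1 < n + 1) :
    Shuffles (n + 1) (q + 1) =
      (Shuffles n q).image (liftAt 0) ∪ (Shuffles n (q + 1)).image (liftAt ⟨q + 1, h⟩) := by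
  ext σ
  obtain ⟨i, τ, rfl⟩ := exists_liftAt_eq σ
  rw [liftAt_mem_shuffles_iff]
  simp only [Finset.mem_union, Finset.mem_image, liftAt_inj, exists_eq_right_right,
    Fin.ext_iff (a := Fin.mk _ h), eq_comm (a := (0 : Fin (n + 1)))]
  tauto

theorem shuffles_succ_eq_image_of_le {n q : ℕ} (h : n ≤ q) :
    Shuffles (n + 1) (q + 1) = (Shuffles n q).image (liftAt 0) := by
  ext σ
  obtain ⟨i, τ, rfl⟩ := exists_liftAt_eq σ
  have : (i : ℕ) ≠ q + 1 := by omega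
  simp [liftAt_mem_shuffles_iff, liftAt_inj, this, eq_comm, and_comm]

theorem sum_shuffles_succ {M : Type*} [AddCommMonoid M] {n q : ℕ} (h : q + 1 < n + 1)
    (f : Perm (Fin (n + 1)) → M) :
    ∑ σ ∈ Shuffles (n + 1) (q + 1), f σ =
      ∑ τ ∈ Shuffles n q, f (liftAt 0 τ) + ∑ τ ∈ Shuffles n (q + 1), f (liftAt ⟨q + 1, h⟩ τ) := by
  have hdisj : Disjoint ((Shuffles n q).image (liftAt 0))
      ((Shuffles n (q + 1)).image (liftAt ⟨q + 1, h⟩)) := by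
    simp [Finset.disjoint_left, liftAt_inj, Fin.ext_iff]
  rw [shuffles_succ_eq_union h, Finset.sum_union hdisj,
    Finset.sum_image fun _ _ _ _ h => liftAt_injective _ h,
    Finset.sum_image fun _ _ _ _ h => liftAt_injective _ h]

theorem sum_shuffles_succ_of_le {M : Type*} [AddCommMonoid M] {n q : ℕ} (h : n ≤ q)
    (f : Perm (Fin (n + 1)) → M) :
    ∑ σ ∈ Shuffles (n + 1) (q + 1), f σ = ∑ τ ∈ Shuffles n q, f (liftAt 0 τ) := by
  rw [shuffles_succ_eq_image_of_le h, Finset.sum_image fun _ _ _ _ h => liftAt_injective _ h]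

section

variable {F : Type*}

theorem insert0_apply {m : ℕ} (x : F) (P : V F (m + 1)) (g : Fin m → F) :
    insert0 x P g = P (Fin.cons x g) :=
  congrArg P (funext fun k => Fin.cases (by simp) (fun k => by simp) k)

/-- The summand `P(Q(F_{s 0}, …, F_{s (q-1)}), F_{s q}, …, F_{s (p+q-1)})` of `P∧̄Q`,
with `F_k = w k`. -/
def shuffleTerm {p q : ℕ} (P : V F (p + 1)) (Q : V F q) (w : ℕ → F) (s : ℕ → ℕ) : F :=
  P (Fin.cons (Q fun k => w (s k)) fun k => w (s (q + k)))

theorem shuffleTerm_liftAt_zero {n p q : ℕ} (P : V F (p + 1)) (Q : V F (q + 1)) (w : ℕ → F)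
    (τ : Perm (Fin n)) :
    shuffleTerm P Q w (liftAt 0 τ).natApply =
      shuffleTerm P (insert0 (w 0) Q) (fun k => w (k + 1)) τ.natApply := by
  have hs : ∀ k, (liftAt 0 τ).natApply (k + 1) = τ.natApply k + 1 := fun k =>
    natApply_liftAt_of_le τ (Nat.zero_le k)
  simp only [shuffleTerm, insert0_apply]
  congr 2
  · refine congrArg Q (funext fun k => ?_)
    refine Fin.cases ?_ (fun k => ?_) k
    · simpa using congrArg w (natApply_liftAt_self 0 τ)
    · simp [hs]
  · funext k
    simp [← hs, add_right_comm]

variable [AddCommGroup F] [Module ℝ F]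

def IsAlt.toAlternatingMap {p : ℕ} {P : V F p} (hP : IsAlt P) : F [⋀^Fin p]→ₗ[ℝ] F where
  toFun := P
  map_update_add' v i x y := by convert hP.1 v i x y
  map_update_smul' v i c x := by convert hP.2.1 v i c x
  map_eq_zero_of_eq' v i j hv hij := hP.2.2 v i j hij hv

theorem IsAlt.apply_cons_cons_swap {p : ℕ} {P : V F (p + 2)} (hP : IsAlt P) (x y : F)
    (g : Fin p → F) : P (Fin.cons x (Fin.cons y g)) = -P (Fin.cons y (Fin.cons x g)) := by
  have := hP.toAlternatingMap.map_swap (Fin.cons y (Fin.cons x g)) (i := 0) (j := 1) (by simp)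
  refine Eq.trans (congrArg P (funext fun k => ?_)) this
  refine Fin.cases (by simp) (Fin.cases (by simp) fun k => ?_) k
  rw [Function.comp_apply, swap_apply_of_ne_of_ne (Fin.succ_ne_zero _) (Fin.succ_succ_ne_one _)]
  rfl

theorem shuffleTerm_liftAt_succ {n p q : ℕ} {P : V F (p + 2)} (hP : IsAlt P) (Q : V F (q + 1))
    (w : ℕ → F) (τ : Perm (Fin n)) (h : q + 1 < n + 1) :
    shuffleTerm P Q w (liftAt ⟨q + 1, h⟩ τ).natApply =
      -shuffleTerm (insert0 (w 0) P) Q (fun k => w (k + 1)) τ.natApply := by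
  have hQ : (fun k : Fin (q + 1) => w ((liftAt ⟨q + 1, h⟩ τ).natApply k)) =
      fun k : Fin (q + 1) => w (τ.natApply k + 1) :=
    funext fun k => by rw [natApply_liftAt_of_lt τ (i := ⟨q + 1, h⟩) k.isLt]
  have hrest : (fun k : Fin (p + 1) => w ((liftAt ⟨q + 1, h⟩ τ).natApply (q + 1 + k))) =
      Fin.cons (w 0) fun k => w (τ.natApply (q + 1 + k) + 1) := by
    funext k
    refine Fin.cases ?_ (fun k => ?_) k
    · simpa using congrArg w (natApply_liftAt_self ⟨q + 1, h⟩ τ)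
    · simp [← add_assoc, natApply_liftAt_of_le τ (i := ⟨q + 1, h⟩) (Nat.le_add_right (q + 1) k)]
  rw [shuffleTerm, hQ, hrest, hP.apply_cons_cons_swap, shuffleTerm, insert0_apply]

theorem nrW_eq_sum {p q N : ℕ} (P : V F (p + 1)) (Q : V F q) (w : ℕ → F)
    (hN : p + 1 + q - 1 = N) :
    nrW P Q (fun k => w k) =
      ∑ σ ∈ Shuffles N q, ((sign σ : ℤ) : ℝ) • shuffleTerm P Q w σ.natApply := by
  subst hN
  rw [nrW, dif_neg p.succ_ne_zero]
  refine Finset.sum_congr rfl fun σ _ => ?_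
  have hk : ∀ k : Fin q, (k : ℕ) < p + q := fun k => by omega
  have hqk : ∀ k : Fin p, q + (k : ℕ) < p + q := fun k => by omega
  simp [shuffleTerm, natApply, hk, hqk]

end

theorem stmt12_general {F : Type*} [AddCommGroup F] [Module ℝ F] {p q : ℕ}
    (P : V F p) (Q : V F (q + 1)) (hP : IsAlt P) (args : ℕ → F) :
    nrW P Q (fun k => args k.1)
      = nrW P (insert0 (args 0) Q) (fun k => args (k.1 + 1))
        + ((-1 : ℝ) ^ (q + 1 + 1)) • nrW (insert0 (args 0) P) Q (fun k => args (k.1 + 1)) := by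
  obtain _ | p := p
  · simp [nrW]
  rw [nrW_eq_sum P Q args (N := p + q + 1) (by omega),
    nrW_eq_sum P (insert0 (args 0) Q) (fun k => args (k + 1)) (N := p + q) (by omega)]
  obtain _ | p := p
  · rw [sum_shuffles_succ_of_le (n := 0 + q) (q := q) (by omega), nrW, dif_pos rfl, Pi.zero_apply,
      smul_zero, add_zero]
    refine Finset.sum_congr rfl fun τ _ => ?_
    simp [shuffleTerm_liftAt_zero]
  · erw [nrW_eq_sum (p := p) (insert0 (args 0) P) Q (fun k => args (k + 1)) (N := p + 1 + q)
      (by omega)]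
    rw [sum_shuffles_succ (by omega), Finset.smul_sum]
    congr 1 <;> refine Finset.sum_congr rfl fun τ _ => ?_
    · simp [shuffleTerm_liftAt_zero]
    · rw [shuffleTerm_liftAt_succ hP, sign_liftAt, smul_smul, smul_neg, ← neg_smul]
      congr 1
      push_cast
      ring

/-- For `P ∈ Alt^p(F,F)`, `Q ∈ Alt^q(F,F)` and `F₁ ∈ F`, with `P̃ = [P,F₁]`, `Q̃ = [Q,F₁]`:
`(P∧̄Q)(F₁,F₂,…,F_{p+q-1}) = (P∧̄Q̃)(F₂,…,F_{p+q-1}) + (-1)^{q+1}(P̃∧̄Q)(F₂,…,F_{p+q-1})`.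
Here the arguments `F₁,F₂,…` are given by the sequence `args : ℕ → F`, and the arity of
`Q` is written as `q+1` so that insertion of `F₁` into `Q` makes sense. -/
theorem stmt12 {F : Type*} [AddCommGroup F] [Module ℝ F] {p q : ℕ}
    (P : V F p) (Q : V F (q + 1)) (hP : IsAlt P) (hQ : IsAlt Q) (args : ℕ → F) :
    nrW P Q (fun k => args k.1)
      = nrW P (insert0 (args 0) Q) (fun k => args (k.1 + 1))
        + ((-1 : ℝ) ^ (q + 1 + 1)) • nrW (insert0 (args 0) P) Q (fun k => args (k.1 + 1)) :=
  stmt12_general P Q hP args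
end

section
/- Under the coordinate transformation ṽ¹ = (1/2)·(Σ_{k,l} η_{kl} v^k v^l)/v^n, ṽ^i = v^i/v^n for 1 < i < n, ṽ^n = −1/v^n (defined where v^n ≠ 0), the conformally rescaled contravariant metric (v^n)² η^{ij} transforms to a metric whose components in the coordinates ṽ are again the constant matrix η^{ij}; that is, Σ_{k,l} (∂ṽ^i/∂v^k)(∂ṽ^j/∂v^l)(v^n)² η^{kl} = η^{ij}. -/
/-!
Write `ṽ^i = φ^i / v^n` with `φ = (Q/2, v^2, …, v^{n-1}, -1)` and `Q = η_{kl} v^k v^l`. The quotient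
rule gives `dṽ^i = dφ^i / v^n - φ^i dv^n / (v^n)²`. The covector `dv^n` is null for `η⁻¹` and
`η⁻¹(α, dv^n) = α_1`, so
`(v^n)² η⁻¹(dṽ^i, dṽ^j) = η⁻¹(dφ^i, dφ^j) - φ^j (dφ^i)_1 / v^n - φ^i (dφ^j)_1 / v^n`.
Only `dφ^1 = ηv` has a nonzero first component, namely `v^n`, and `η⁻¹(ηv, ηv) = Q`,
`η⁻¹(ηv, dv^j) = v^j`; with these the right-hand side reduces to `η^{ij}` in each case.
-/

/-- The partial derivative `∂f/∂v^k` of a function on `ℝ^n`. -/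
noncomputable def pdF {n : ℕ} (k : Fin n) (f : (Fin n → ℝ) → ℝ) : (Fin n → ℝ) → ℝ :=
  fun x => fderiv ℝ f x (Pi.single k 1)

/-- The constant anti-diagonal metric `η_{ij} = δ_{i,n+1-j}` (0-indexed: `i + j = n-1`);
its inverse `η^{ij}` is given by the same matrix. -/
def etaM (n : ℕ) (k l : Fin n) : ℝ := if k.1 + l.1 = n - 1 then 1 else 0

/-- The inverted flat coordinates `ṽ¹ = (1/2)(Σ η_{kl}v^k v^l)/v^n`, `ṽ^i = v^i/v^n`
(for `1 < i < n`), `ṽ^n = -1/v^n`, on the open set `{v^n ≠ 0}` (here `n = m+2`). -/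
noncomputable def vtil (m : ℕ) (i : Fin (m + 2)) (v : Fin (m + 2) → ℝ) : ℝ :=
  if i.1 = 0 then (∑ k, ∑ l, etaM (m + 2) k l * v k * v l) / (2 * v (Fin.last (m + 1)))
  else if i.1 = m + 1 then -1 / v (Fin.last (m + 1))
  else v i / v (Fin.last (m + 1))

open ContinuousLinearMap Finset

section AntiDiagonal

variable {n : ℕ}

lemma etaM_eq_ite_rev (k l : Fin n) : etaM n k l = if l = k.rev then 1 else 0 := by
  have : k.1 + l.1 = n - 1 ↔ l = k.rev := by
    rw [Fin.ext_iff, Fin.val_rev]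
    omega
  simp only [etaM, this]

lemma Fin.sum_comp_rev {M : Type*} [AddCommMonoid M] (f : Fin n → M) :
    ∑ i : Fin n, f i.rev = ∑ i, f i :=
  Equiv.sum_comp Fin.revPerm f

lemma Fin.eq_rev_comm {i j : Fin n} : i = j.rev ↔ j = i.rev :=
  eq_comm.trans Fin.rev_eq_iff

-- The inverse metric on covectors, `η⁻¹(α, β) = η^{kl} α_k β_l`.
noncomputable def etaDual :
    ((Fin n → ℝ) →L[ℝ] ℝ) →ₗ[ℝ] ((Fin n → ℝ) →L[ℝ] ℝ) →ₗ[ℝ] ℝ :=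
  LinearMap.mk₂ ℝ (fun α β => ∑ k, α (Pi.single k 1) * β (Pi.single k.rev 1))
    (by simp [add_mul, sum_add_distrib]) (by simp [mul_sum, mul_assoc])
    (by simp [mul_add, sum_add_distrib]) (by simp [mul_sum, mul_left_comm])

lemma etaDual_apply (α β : (Fin n → ℝ) →L[ℝ] ℝ) :
    etaDual α β = ∑ k, α (Pi.single k 1) * β (Pi.single k.rev 1) := rfl

lemma etaDual_comm (α β : (Fin n → ℝ) →L[ℝ] ℝ) : etaDual α β = etaDual β α := by
  rw [etaDual_apply, etaDual_apply, ← Fin.sum_comp_rev]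
  simp [mul_comm]

lemma sum_sum_mul_etaM (α β : (Fin n → ℝ) →L[ℝ] ℝ) (c : ℝ) :
    ∑ k, ∑ l, α (Pi.single k 1) * β (Pi.single l 1) * (c * etaM n k l) = c * etaDual α β := by
  simp [etaDual_apply, etaM_eq_ite_rev, sum_mul, mul_comm c]

@[simp]
lemma etaDual_proj_left (a : Fin n) (β : (Fin n → ℝ) →L[ℝ] ℝ) :
    etaDual (proj a) β = β (Pi.single a.rev 1) := by
  simp [etaDual_apply, Pi.single_apply]

@[simp]
lemma etaDual_proj_right (α : (Fin n → ℝ) →L[ℝ] ℝ) (b : Fin n) :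
    etaDual α (proj b) = α (Pi.single b.rev 1) := by
  rw [etaDual_comm, etaDual_proj_left]

-- Index lowering, `v ↦ η_{kl} v^l`.
noncomputable def etaFlat (v : Fin n → ℝ) : (Fin n → ℝ) →L[ℝ] ℝ :=
  ∑ a, v a.rev • proj a

@[simp]
lemma etaFlat_apply (v w : Fin n → ℝ) : etaFlat v w = ∑ a, v a.rev * w a := by
  simp [etaFlat]

lemma sum_sum_etaM_mul_mul (v : Fin n → ℝ) :
    ∑ k, ∑ l, etaM n k l * v k * v l = ∑ k, v k * v k.rev := by
  simp [etaM_eq_ite_rev]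

@[simp]
lemma etaFlat_single (v : Fin n → ℝ) (b : Fin n) : etaFlat v (Pi.single b 1) = v b.rev := by
  simp [Pi.single_apply]

lemma etaDual_etaFlat_self (v : Fin n → ℝ) :
    etaDual (etaFlat v) (etaFlat v) = ∑ k, ∑ l, etaM n k l * v k * v l := by
  rw [sum_sum_etaM_mul_mul, etaDual_apply]
  simp [Pi.single_apply, mul_comm]

lemma hasFDerivAt_sum_sum_etaM_mul_mul (v : Fin n → ℝ) :
    HasFDerivAt (fun w : Fin n → ℝ => ∑ k, ∑ l, etaM n k l * w k * w l)
      ((2 : ℝ) • etaFlat v) v := by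
  simp_rw [sum_sum_etaM_mul_mul]
  have h : HasFDerivAt (fun w : Fin n → ℝ => ∑ a, w a * w a.rev)
      (∑ a, (v a • proj a.rev + v a.rev • proj a)) v :=
    HasFDerivAt.fun_sum fun a _ =>
      (hasFDerivAt_apply (𝕜 := ℝ) a v).fun_mul (hasFDerivAt_apply a.rev v)
  refine h.congr_fderiv (ContinuousLinearMap.ext fun w => ?_)
  simp only [sum_add_distrib, add_apply, _root_.sum_apply, smul_apply, proj_apply, smul_eq_mul,
    etaFlat_apply, two_mul, add_left_inj]
  simpa using Fin.sum_comp_rev fun a => v a.rev * w a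

lemma hasFDerivAt_div_apply {φ : (Fin n → ℝ) → ℝ} {φ' : (Fin n → ℝ) →L[ℝ] ℝ} {v : Fin n → ℝ}
    {L : Fin n} (hφ : HasFDerivAt φ φ' v) (hv : v L ≠ 0) :
    HasFDerivAt (fun w => φ w / w L) ((v L)⁻¹ • φ' - (φ v / v L ^ 2) • proj L) v := by
  simp_rw [div_eq_mul_inv]
  refine (hφ.mul ((hasDerivAt_inv hv).comp_hasFDerivAt v (hasFDerivAt_apply L v))).congr_fderiv ?_
  ext w
  simp only [add_apply, smul_apply, Function.comp_apply, proj_apply, smul_eq_mul, sub_apply]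
  ring

end AntiDiagonal

section Inversion

variable {m : ℕ}

lemma sq_mul_etaDual_sub_smul_proj_last {u : ℝ} (hu : u ≠ 0) (α β : (Fin (m + 2) → ℝ) →L[ℝ] ℝ)
    (p q : ℝ) :
    u ^ 2 * etaDual (u⁻¹ • α - (p / u ^ 2) • proj (Fin.last (m + 1)))
        (u⁻¹ • β - (q / u ^ 2) • proj (Fin.last (m + 1)))
      = etaDual α β - q / u * α (Pi.single 0 1) - p / u * β (Pi.single 0 1) := by
  have h0 : (Pi.single 0 1 : Fin (m + 2) → ℝ) (Fin.last (m + 1)) = 0 :=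
    Pi.single_eq_of_ne Fin.last_pos.ne' 1
  simp only [map_sub, map_smul, LinearMap.sub_apply, LinearMap.smul_apply, etaDual_proj_left,
    etaDual_proj_right, Fin.rev_last, proj_apply, h0, smul_eq_mul]
  field_simp
  ring

noncomputable def vtilNum (m : ℕ) (i : Fin (m + 2)) (w : Fin (m + 2) → ℝ) : ℝ :=
  if i = 0 then (∑ k, ∑ l, etaM (m + 2) k l * w k * w l) / 2
  else if i = Fin.last (m + 1) then -1
  else w i

noncomputable def vtilNumDeriv (m : ℕ) (i : Fin (m + 2)) (v : Fin (m + 2) → ℝ) :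
    (Fin (m + 2) → ℝ) →L[ℝ] ℝ :=
  if i = 0 then etaFlat v
  else if i = Fin.last (m + 1) then 0
  else proj i

lemma vtil_eq_div (i : Fin (m + 2)) :
    vtil m i = fun w => vtilNum m i w / w (Fin.last (m + 1)) := by
  funext w
  simp only [vtil, vtilNum, Fin.ext_iff, Fin.val_zero, Fin.val_last]
  split_ifs <;> ring

lemma hasFDerivAt_vtilNum (i : Fin (m + 2)) (v : Fin (m + 2) → ℝ) :
    HasFDerivAt (vtilNum m i) (vtilNumDeriv m i v) v := by
  unfold vtilNum vtilNumDeriv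
  split_ifs
  · simpa [div_eq_mul_inv, smul_smul] using
      (hasFDerivAt_sum_sum_etaM_mul_mul v).mul_const (2 : ℝ)⁻¹
  · exact hasFDerivAt_const _ _
  · exact hasFDerivAt_apply i v

lemma hasFDerivAt_vtil {v : Fin (m + 2) → ℝ} (hv : v (Fin.last (m + 1)) ≠ 0) (i : Fin (m + 2)) :
    HasFDerivAt (vtil m i) ((v (Fin.last (m + 1)))⁻¹ • vtilNumDeriv m i v
      - (vtilNum m i v / v (Fin.last (m + 1)) ^ 2) • proj (Fin.last (m + 1))) v := by
  rw [vtil_eq_div]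
  exact hasFDerivAt_div_apply (hasFDerivAt_vtilNum i v) hv

lemma etaDual_vtilNumDeriv {v : Fin (m + 2) → ℝ} (hv : v (Fin.last (m + 1)) ≠ 0)
    (i j : Fin (m + 2)) :
    etaDual (vtilNumDeriv m i v) (vtilNumDeriv m j v)
      - vtilNum m j v / v (Fin.last (m + 1)) * vtilNumDeriv m i v (Pi.single 0 1)
      - vtilNum m i v / v (Fin.last (m + 1)) * vtilNumDeriv m j v (Pi.single 0 1)
      = etaM (m + 2) i j := by
  unfold vtilNum vtilNumDeriv
  split_ifs <;> subst_vars <;>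
  simp [etaM_eq_ite_rev, etaDual_etaFlat_self, Pi.single_apply, Fin.eq_rev_comm,
    @eq_comm _ (0 : Fin (m + 2)), Fin.rev_eq_iff, sub_half, *]

end Inversion

/-- Under the inversion `v ↦ ṽ` the conformally rescaled contravariant metric
`(v^n)²η^{ij}` transforms back to the constant metric `η^{ij}`:
`Σ_{k,l} (∂ṽ^i/∂v^k)(∂ṽ^j/∂v^l)(v^n)²η^{kl} = η^{ij}` wherever `v^n ≠ 0`. -/
theorem stmt16 (m : ℕ) (v : Fin (m + 2) → ℝ) (hv : v (Fin.last (m + 1)) ≠ 0)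
    (i j : Fin (m + 2)) :
    (∑ k, ∑ l, pdF k (vtil m i) v * pdF l (vtil m j) v
        * ((v (Fin.last (m + 1))) ^ 2 * etaM (m + 2) k l))
      = etaM (m + 2) i j := by
  simp only [pdF]
  rw [sum_sum_mul_etaM, (hasFDerivAt_vtil hv i).fderiv, (hasFDerivAt_vtil hv j).fderiv,
    sq_mul_etaDual_sub_smul_proj_last hv, etaDual_vtilNumDeriv hv]
end
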